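/- arXiv:2004.13442 — 2 statements merged into one kernel-verified Lean document; each statement's English description precedes it below -/
import Mathlib

section
/- Let G be a connected Δ-regular bipartite graph with parts V⁰, V¹ of size n each and second adjacency eigenvalue at most λ. Let ρ > 0, i ∈ {0,1}, and let S ⊆ Vⁱ with |S| ≤ ρn. Then the vertex boundary satisfies |∂S| ≥ |S| / (ρ + (λ²/Δ²)(1 − ρ)). -/
/-!
Let `x` be the indicator of `S`, `y = A x`, and `X ⊇ S` the colour class of `S`, with `N = |X|`.
As `S` is independent, `y` vanishes off `∂S` and sums to `Δ|S|`, so Cauchy–Schwarz gives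
`(Δ|S|)² ≤ |∂S| ‖y‖²`. Split `x = z + (|S|/N) 1_X`. Since `A² 1_X = Δ² 1_X` and `z ⊥ 1_X`, the
two parts stay orthogonal under `A`, so `‖y‖² = ‖A z‖² + Δ²|S|²/N`. The `±Δ`-eigenvectors are
constant on colour classes: a `Δ`-eigenvector lies in the kernel of the Laplacian, hence is
constant on the connected graph, and flipping signs on one class turns a `-Δ`-eigenvector into a
`Δ`-eigenvector. As `z` is supported on `X` with sum zero, it only sees eigenvalues of modulus
`≤ λ`, so `‖A z‖² ≤ λ² ‖z‖² = λ² (|S| - |S|²/N)`. Rearranging with `|S| ≤ ρ N` gives the bound.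
-/

open Finset Matrix

section DotProduct

variable {ι : Type*} [Fintype ι]

theorem Matrix.dotProduct_add_smul_self_of_dotProduct_eq_zero {R : Type*} [CommRing R]
    {u w : ι → R} (α : R) (h : u ⬝ᵥ w = 0) :
    (u + α • w) ⬝ᵥ (u + α • w) = u ⬝ᵥ u + α ^ 2 * (w ⬝ᵥ w) := by
  simp only [add_dotProduct, dotProduct_add, smul_dotProduct, dotProduct_smul, smul_eq_mul,
    dotProduct_comm w u, h]
  ring

theorem Matrix.IsSymm.mulVec_dotProduct {R : Type*} [CommSemiring R] {A : Matrix ι ι R}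
    (hA : A.IsSymm) (u w : ι → R) : A *ᵥ u ⬝ᵥ w = u ⬝ᵥ A *ᵥ w := by
  rw [dotProduct_mulVec, ← mulVec_transpose, hA.eq]

theorem Matrix.IsSymm.mulVec_add_smul_dotProduct_self {R : Type*} [CommRing R]
    {A : Matrix ι ι R} (hA : A.IsSymm) {z e : ι → R} {κ : R} (α : R)
    (he : A *ᵥ (A *ᵥ e) = κ • e) (hze : z ⬝ᵥ e = 0) :
    A *ᵥ (z + α • e) ⬝ᵥ A *ᵥ (z + α • e) = A *ᵥ z ⬝ᵥ A *ᵥ z + α ^ 2 * (κ * (e ⬝ᵥ e)) := by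
  have hcross : A *ᵥ z ⬝ᵥ A *ᵥ e = 0 := by
    rw [hA.mulVec_dotProduct, he, dotProduct_smul, hze, smul_zero]
  rw [mulVec_add, mulVec_smul, dotProduct_add_smul_self_of_dotProduct_eq_zero α hcross,
    hA.mulVec_dotProduct e (A *ᵥ e), he, dotProduct_smul, smul_eq_mul]

theorem Matrix.comp_dotProduct_eq_zero {β : Type*} (f : β → ℝ) (C : ι → β) {b : β}
    {z : ι → ℝ} (hz : ∀ u, C u ≠ b → z u = 0) (hsum : ∑ u, z u = 0) : (f ∘ C) ⬝ᵥ z = 0 := by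
  calc (f ∘ C) ⬝ᵥ z = ∑ u, f b * z u := by
        refine sum_congr rfl fun u _ => ?_
        by_cases hu : C u = b
        · simp [hu]
        · simp [hz u hu]
    _ = 0 := by rw [← mul_sum, hsum, mul_zero]

theorem Matrix.IsHermitian.mulVec_dotProduct_mulVec_self_le [DecidableEq ι]
    {A : Matrix ι ι ℝ} (hA : A.IsHermitian) {c : ℝ} {z : ι → ℝ}
    (hz : ∀ μ ∈ spectrum ℝ A, c < |μ| → ∀ v, A *ᵥ v = μ • v → v ⬝ᵥ z = 0) :
    A *ᵥ z ⬝ᵥ A *ᵥ z ≤ c ^ 2 * (z ⬝ᵥ z) := by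
  set b := hA.eigenvectorBasis
  have parseval (w : ι → ℝ) : w ⬝ᵥ w = ∑ j, (⇑(b j) ⬝ᵥ w) ^ 2 := by
    have := b.sum_sq_inner_right (WithLp.toLp 2 w)
    simp only [EuclideanSpace.real_norm_sq_eq, EuclideanSpace.inner_eq_star_dotProduct,
      star_trivial, dotProduct_comm w] at this
    rw [this]
    simp [dotProduct, sq]
  have coeff (j : ι) : ⇑(b j) ⬝ᵥ A *ᵥ z = hA.eigenvalues j * (⇑(b j) ⬝ᵥ z) := by
    rw [dotProduct_mulVec, ← mulVec_transpose, ← conjTranspose_eq_transpose_of_trivial, hA.eq,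
      hA.mulVec_eigenvectorBasis, smul_dotProduct, smul_eq_mul]
  rw [parseval, parseval, mul_sum]
  refine sum_le_sum fun j _ => ?_
  rw [coeff, mul_pow]
  by_cases hj : c < |hA.eigenvalues j|
  · rw [hz _ (hA.eigenvalues_mem_spectrum_real j) hj _ (hA.mulVec_eigenvectorBasis j)]
    simp
  · refine mul_le_mul_of_nonneg_right ?_ (sq_nonneg _)
    rw [← sq_abs]
    exact pow_le_pow_left₀ (abs_nonneg _) (not_lt.mp hj) 2

end DotProduct

theorem div_le_of_sq_le_mul {s N b d lam ρ : ℝ} (hs : 0 < s) (hN : 0 ≤ N) (hsN : s ≤ ρ * N)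
    (hb : 0 ≤ b) (hlam0 : 0 < lam) (hlamd : lam < d)
    (h : (d * s) ^ 2 ≤ b * (lam ^ 2 * (s - s ^ 2 / N) + d ^ 2 * (s ^ 2 / N))) :
    s / (ρ + lam ^ 2 / d ^ 2 * (1 - ρ)) ≤ b := by
  have hNpos : 0 < N := lt_of_le_of_ne hN fun h0 => by rw [← h0, mul_zero] at hsN; linarith
  have hρ : 0 < ρ := pos_of_mul_pos_left (hs.trans_le hsN) hN
  have hd : 0 < d := hlam0.trans hlamd
  have hgap : 0 ≤ d ^ 2 - lam ^ 2 := by nlinarith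
  have hD : d ^ 2 * (ρ + lam ^ 2 / d ^ 2 * (1 - ρ)) = lam ^ 2 + (d ^ 2 - lam ^ 2) * ρ := by
    field_simp
    ring
  have hDpos : 0 < ρ + lam ^ 2 / d ^ 2 * (1 - ρ) := by
    refine pos_of_mul_pos_right (a := d ^ 2) ?_ (by positivity)
    rw [hD]
    positivity
  rw [div_le_iff₀ hDpos]
  have key : d ^ 2 * s * s ≤ d ^ 2 * (b * (ρ + lam ^ 2 / d ^ 2 * (1 - ρ))) * s :=
    calc d ^ 2 * s * s = (d * s) ^ 2 := by ring
      _ ≤ b * (lam ^ 2 * (s - s ^ 2 / N) + d ^ 2 * (s ^ 2 / N)) := h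
      _ = b * s * (lam ^ 2 + (d ^ 2 - lam ^ 2) * (s / N)) := by ring
      _ ≤ b * s * (lam ^ 2 + (d ^ 2 - lam ^ 2) * ρ) := by
          gcongr
          exact (div_le_iff₀ hNpos).mpr hsN
      _ = d ^ 2 * (b * (ρ + lam ^ 2 / d ^ 2 * (1 - ρ))) * s := by
          rw [mul_left_comm (d ^ 2) b, hD]; ring
  exact le_of_mul_le_mul_left (le_of_mul_le_mul_right key hs) (by positivity)

namespace SimpleGraph

variable {V : Type*} {G : SimpleGraph V} {Δ : ℕ}

namespace Coloring

def sign (C : G.Coloring Bool) (u : V) : ℝ := if C u then -1 else 1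

theorem sign_mul_sign (C : G.Coloring Bool) (u : V) : C.sign u * C.sign u = 1 := by
  unfold sign; split <;> norm_num

theorem sign_eq_neg_of_adj (C : G.Coloring Bool) {u w : V} (h : G.Adj u w) :
    C.sign w = -C.sign u := by
  have := C.valid h
  unfold sign
  revert this; cases C u <;> cases C w <;> simp

variable [Fintype V] [DecidableRel G.Adj]

theorem adjMatrix_mulVec_sign_mul (C : G.Coloring Bool) (v : V → ℝ) :
    G.adjMatrix ℝ *ᵥ (C.sign * v) = -(C.sign * (G.adjMatrix ℝ *ᵥ v)) := by
  ext u
  simp only [adjMatrix_mulVec_apply, Pi.mul_apply, Pi.neg_apply, mul_sum, ← sum_neg_distrib]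
  refine sum_congr rfl fun w hw => ?_
  rw [C.sign_eq_neg_of_adj ((mem_neighborFinset G u w).mp hw), neg_mul]

theorem adjMatrix_mulVec_indicator_colorClass (C : G.Coloring Bool)
    (hreg : G.IsRegularOfDegree Δ) (b : Bool) :
    G.adjMatrix ℝ *ᵥ (fun u => if C u = b then 1 else 0) =
      (Δ : ℝ) • fun u => if C u = !b then 1 else 0 := by
  ext u
  have hnbr : ∀ w ∈ G.neighborFinset u,
      (if C w = b then (1 : ℝ) else 0) = if C u = b then 0 else 1 := fun w hw => by
    have := C.valid ((mem_neighborFinset G u w).mp hw)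
    revert this; cases C u <;> cases C w <;> cases b <;> simp
  rw [adjMatrix_mulVec_apply, sum_congr rfl hnbr, sum_const, card_neighborFinset_eq_degree,
    hreg.degree_eq, Pi.smul_apply]
  cases C u <;> cases b <;> simp

end Coloring

variable [Fintype V] [DecidableEq V] [DecidableRel G.Adj]

def vertexBoundary (G : SimpleGraph V) [DecidableRel G.Adj] (S : Finset V) : Finset V :=
  {w | w ∉ S ∧ ∃ v ∈ S, G.Adj w v}

@[simp]
theorem mem_vertexBoundary {S : Finset V} {w : V} :
    w ∈ G.vertexBoundary S ↔ w ∉ S ∧ ∃ v ∈ S, G.Adj w v := by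
  simp [vertexBoundary]

theorem sq_mul_card_le_card_vertexBoundary_mul (hreg : G.IsRegularOfDegree Δ) {S : Finset V}
    (hS : G.IsIndepSet (S : Set V)) :
    ((Δ : ℝ) * #S) ^ 2 ≤ #(G.vertexBoundary S) *
      (G.adjMatrix ℝ *ᵥ (fun u => if u ∈ S then 1 else 0) ⬝ᵥ
        G.adjMatrix ℝ *ᵥ (fun u => if u ∈ S then 1 else 0)) := by
  set x : V → ℝ := fun u => if u ∈ S then 1 else 0
  set y := G.adjMatrix ℝ *ᵥ x
  have hsupp : ∀ u ∉ G.vertexBoundary S, y u = 0 := by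
    intro u hu
    simp only [y, adjMatrix_mulVec_apply]
    refine sum_eq_zero fun w hw => if_neg fun hwS => ?_
    have hadj := (mem_neighborFinset G u w).mp hw
    by_cases huS : u ∈ S
    · exact hS huS hwS hadj.ne hadj
    · exact hu (mem_vertexBoundary.mpr ⟨huS, w, hwS, hadj⟩)
  have htotal : ∑ u, y u = Δ * #S := by
    have hone : G.adjMatrix ℝ *ᵥ 1 = (Δ : ℝ) • 1 := by
      ext u
      simp [hreg.degree_eq u]
    rw [← one_dotProduct, ← (isSymm_adjMatrix G).mulVec_dotProduct, hone, smul_dotProduct,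
      one_dotProduct, smul_eq_mul]
    simp [x]
  calc ((Δ : ℝ) * #S) ^ 2 = (∑ u ∈ G.vertexBoundary S, y u) ^ 2 := by
        rw [← htotal, sum_subset (subset_univ _) fun u _ hu => hsupp u hu]
    _ ≤ #(G.vertexBoundary S) * ∑ u ∈ G.vertexBoundary S, y u ^ 2 := sq_sum_le_card_mul_sum_sq
    _ ≤ #(G.vertexBoundary S) * ∑ u, y u ^ 2 := by
        gcongr _ * ?_
        exact sum_le_sum_of_subset_of_nonneg (subset_univ _) fun u _ _ => sq_nonneg _
    _ = #(G.vertexBoundary S) * (y ⬝ᵥ y) := by simp only [dotProduct, sq]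

theorem IsRegularOfDegree.eq_of_mulVec_eq_smul (hreg : G.IsRegularOfDegree Δ)
    (hconn : G.Connected) {v : V → ℝ} (hv : G.adjMatrix ℝ *ᵥ v = (Δ : ℝ) • v) (a b : V) :
    v a = v b := by
  refine (lapMatrix_mulVec_eq_zero_iff_forall_reachable G).mp ?_ a b (hconn.preconnected a b)
  ext u
  rw [lapMatrix_mulVec_apply, ← adjMatrix_mulVec_apply, hv, hreg.degree_eq]
  simp

namespace Coloring

theorem exists_eq_comp_of_mulVec_eq_smul (C : G.Coloring Bool)
    (hreg : G.IsRegularOfDegree Δ) (hconn : G.Connected) {μ : ℝ} (hμ : μ = Δ ∨ μ = -Δ)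
    {v : V → ℝ} (hv : G.adjMatrix ℝ *ᵥ v = μ • v) : ∃ f : Bool → ℝ, v = f ∘ C := by
  obtain ⟨a⟩ := hconn.nonempty
  rcases hμ with rfl | rfl
  · exact ⟨fun _ => v a, funext fun u => hreg.eq_of_mulVec_eq_smul hconn hv u a⟩
  · have hflip : G.adjMatrix ℝ *ᵥ (C.sign * v) = (Δ : ℝ) • (C.sign * v) := by
      rw [C.adjMatrix_mulVec_sign_mul, hv]
      ext u
      simp only [Pi.neg_apply, Pi.mul_apply, Pi.smul_apply, smul_eq_mul]
      ring
    refine ⟨fun b => (if b then -1 else 1) * (C.sign a * v a), funext fun u => ?_⟩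
    have hu : C.sign u * v u = C.sign a * v a := hreg.eq_of_mulVec_eq_smul hconn hflip u a
    change v u = C.sign u * (C.sign a * v a)
    rw [← hu, ← mul_assoc, C.sign_mul_sign, one_mul]

theorem mulVec_dotProduct_self_le_of_sum_eq_zero (C : G.Coloring Bool)
    (hreg : G.IsRegularOfDegree Δ) (hconn : G.Connected) {lam : ℝ}
    (hspec : ∀ μ ∈ spectrum ℝ (G.adjMatrix ℝ), μ ≠ Δ → μ ≠ -Δ → |μ| ≤ lam)
    {i : Bool} {z : V → ℝ} (hz_off : ∀ u, C u ≠ i → z u = 0) (hz_sum : ∑ u, z u = 0) :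
    G.adjMatrix ℝ *ᵥ z ⬝ᵥ G.adjMatrix ℝ *ᵥ z ≤ lam ^ 2 * (z ⬝ᵥ z) := by
  refine (isHermitian_adjMatrix ℝ G).mulVec_dotProduct_mulVec_self_le fun μ hμ hlt v hv => ?_
  have hμΔ : μ = Δ ∨ μ = -Δ := by
    by_contra h
    rw [not_or] at h
    exact (hspec μ hμ h.1 h.2).not_gt hlt
  obtain ⟨f, rfl⟩ := C.exists_eq_comp_of_mulVec_eq_smul hreg hconn hμΔ hv
  exact comp_dotProduct_eq_zero f C hz_off hz_sum

theorem mulVec_indicator_dotProduct_self_le (C : G.Coloring Bool)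
    (hreg : G.IsRegularOfDegree Δ) (hconn : G.Connected) {lam : ℝ}
    (hspec : ∀ μ ∈ spectrum ℝ (G.adjMatrix ℝ), μ ≠ Δ → μ ≠ -Δ → |μ| ≤ lam)
    {i : Bool} {S : Finset V} (hS : ∀ u ∈ S, C u = i) :
    G.adjMatrix ℝ *ᵥ (fun u => if u ∈ S then 1 else 0) ⬝ᵥ
        G.adjMatrix ℝ *ᵥ (fun u => if u ∈ S then 1 else 0) ≤
      lam ^ 2 * (#S - (#S : ℝ) ^ 2 / #{u | C u = i}) +
        Δ ^ 2 * ((#S : ℝ) ^ 2 / #{u | C u = i}) := by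
  set N : ℝ := (#({u | C u = i} : Finset V) : ℝ)
  set x : V → ℝ := fun u => if u ∈ S then 1 else 0
  set e : V → ℝ := fun u => if C u = i then 1 else 0
  set α : ℝ := #S / N
  set z := x - α • e
  have hαN : α * N = #S := div_mul_cancel_of_imp fun hN => by
    have : #S ≤ #{u | C u = i} := card_le_card fun u hu => mem_filter.mpr ⟨mem_univ u, hS u hu⟩
    exact_mod_cast Nat.eq_zero_of_le_zero (this.trans (Nat.cast_eq_zero.mp hN).le)
  have hz_off : ∀ u, C u ≠ i → z u = 0 := fun u hu => by
    have huS : u ∉ S := fun h => hu (hS u h)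
    simp [z, x, e, huS, hu]
  have hz_sum : ∑ u, z u = 0 := by
    simp only [z, Pi.sub_apply, Pi.smul_apply, sum_sub_distrib, ← smul_sum, x, e]
    rw [sum_boole, sum_boole, filter_mem_eq_inter, univ_inter, smul_eq_mul, hαN, sub_self]
  have hze : z ⬝ᵥ e = 0 := by
    rw [dotProduct_comm]
    exact comp_dotProduct_eq_zero (fun b => if b = i then 1 else 0) C hz_off hz_sum
  have hAAe : G.adjMatrix ℝ *ᵥ (G.adjMatrix ℝ *ᵥ e) = ((Δ : ℝ) ^ 2) • e := by
    rw [C.adjMatrix_mulVec_indicator_colorClass hreg, mulVec_smul,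
      C.adjMatrix_mulVec_indicator_colorClass hreg, Bool.not_not, smul_smul, sq]
  have hee : e ⬝ᵥ e = N := by simp +contextual [e, N, dotProduct]
  have hx : x = z + α • e := (sub_add_cancel x _).symm
  have hzz : z ⬝ᵥ z = #S - α ^ 2 * N := by
    have hxx : x ⬝ᵥ x = #S := by simp [x, dotProduct]
    rw [← hxx, hx, dotProduct_add_smul_self_of_dotProduct_eq_zero α hze, hee]
    ring
  have hα2 : α ^ 2 * N = #S ^ 2 / N := by rw [sq, mul_assoc, hαN]; ring
  calc G.adjMatrix ℝ *ᵥ x ⬝ᵥ G.adjMatrix ℝ *ᵥ x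
        = G.adjMatrix ℝ *ᵥ z ⬝ᵥ G.adjMatrix ℝ *ᵥ z + α ^ 2 * (Δ ^ 2 * (e ⬝ᵥ e)) := by
        rw [hx, (isSymm_adjMatrix G).mulVec_add_smul_dotProduct_self α hAAe hze]
    _ ≤ lam ^ 2 * (#S - α ^ 2 * N) + Δ ^ 2 * (α ^ 2 * N) := by
        rw [hee, ← hzz]
        linarith [C.mulVec_dotProduct_self_le_of_sum_eq_zero hreg hconn hspec hz_off hz_sum]
    _ = lam ^ 2 * (#S - #S ^ 2 / N) + Δ ^ 2 * (#S ^ 2 / N) := by rw [hα2]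

theorem card_div_le_card_vertexBoundary (C : G.Coloring Bool) (hconn : G.Connected)
    (hreg : G.IsRegularOfDegree Δ) {lam ρ : ℝ} (hlam0 : 0 < lam) (hlamΔ : lam < Δ)
    (hspec : ∀ μ ∈ spectrum ℝ (G.adjMatrix ℝ), μ ≠ Δ → μ ≠ -Δ → |μ| ≤ lam)
    {i : Bool} {S : Finset V} (hS : ∀ u ∈ S, C u = i) (hSρ : (#S : ℝ) ≤ ρ * #{u | C u = i}) :
    #S / (ρ + lam ^ 2 / Δ ^ 2 * (1 - ρ)) ≤ #(G.vertexBoundary S) := by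
  rcases S.eq_empty_or_nonempty with rfl | hSne
  · simp
  have hindep : G.IsIndepSet (S : Set V) := (C.isIndepSet_colorClass i).mono fun u hu => hS u hu
  refine div_le_of_sq_le_mul (by exact_mod_cast hSne.card_pos) (Nat.cast_nonneg _) hSρ
    (Nat.cast_nonneg _) hlam0 hlamΔ ?_
  exact (sq_mul_card_le_card_vertexBoundary_mul hreg hindep).trans
    (mul_le_mul_of_nonneg_left (C.mulVec_indicator_dotProduct_self_le hreg hconn hspec hS)
      (Nat.cast_nonneg _))

end Coloring

end SimpleGraph

theorem stmt2_general (n Δ : ℕ) (lam ρ : ℝ) (hlam0 : 0 < lam)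
    (hlamΔ : lam < Δ)
    (G : SimpleGraph (Fin n ⊕ Fin n)) [DecidableRel G.Adj]
    (hconn : G.Connected)
    (hbip : ∀ a b : Fin n, ¬ G.Adj (Sum.inl a) (Sum.inl b) ∧ ¬ G.Adj (Sum.inr a) (Sum.inr b))
    (hreg : ∀ v, G.degree v = Δ)
    (hspec : ∀ μ ∈ spectrum ℝ (G.adjMatrix ℝ), μ ≠ (Δ : ℝ) → μ ≠ -(Δ : ℝ) → |μ| ≤ lam)
    (i : Bool) (S : Finset (Fin n)) (hScard : (S.card : ℝ) ≤ ρ * n) :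
    -- embed `S` into side `i` of the bipartition
    let emb : Fin n → Fin n ⊕ Fin n := fun a => if i then Sum.inr a else Sum.inl a
    let Semb : Finset (Fin n ⊕ Fin n) := S.image emb
    let bdry : Finset (Fin n ⊕ Fin n) :=
      Finset.univ.filter (fun w => w ∉ Semb ∧ ∃ v ∈ Semb, G.Adj w v)
    (S.card : ℝ) / (ρ + (lam ^ 2 / (Δ : ℝ) ^ 2) * (1 - ρ)) ≤ (bdry.card : ℝ) := by
  intro emb Semb bdry
  let C : G.Coloring Bool := SimpleGraph.Coloring.mk Sum.isRight fun {u w} h => by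
    cases u <;> cases w <;> simp_all
  have hC : ∀ u, C u = u.isRight := fun _ => rfl
  have hemb : Function.Injective emb := by
    cases i <;> intro a b h <;> simpa [emb] using h
  have hclass : ({u | C u = i} : Finset _) = univ.image emb := by
    ext u; cases u <;> cases i <;> simp [hC, emb]
  have hcard : #Semb = #S := card_image_of_injective S hemb
  have hSemb : ∀ u ∈ Semb, C u = i := by
    cases i <;> simp [Semb, hC, emb]
  have hclass_card : #({u | C u = i} : Finset _) = n := by
    rw [hclass, card_image_of_injective _ hemb, card_univ, Fintype.card_fin]
  have := C.card_div_le_card_vertexBoundary hconn hreg hlam0 hlamΔ hspec hSemb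
    (by rwa [hcard, hclass_card])
  rwa [hcard] at this

/-- Tanner's vertex-expansion bound for bipartite regular expanders. -/
theorem stmt2 (n Δ : ℕ) (lam ρ : ℝ) (hn : 0 < n) (hΔ : 3 ≤ Δ) (hlam0 : 0 < lam)
    (hlamΔ : lam < Δ) (hρ : 0 < ρ)
    (G : SimpleGraph (Fin n ⊕ Fin n)) [DecidableRel G.Adj]
    (hconn : G.Connected)
    (hbip : ∀ a b : Fin n, ¬ G.Adj (Sum.inl a) (Sum.inl b) ∧ ¬ G.Adj (Sum.inr a) (Sum.inr b))
    (hreg : ∀ v, G.degree v = Δ)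
    (hspec : ∀ μ ∈ spectrum ℝ (G.adjMatrix ℝ), μ ≠ (Δ : ℝ) → μ ≠ -(Δ : ℝ) → |μ| ≤ lam)
    (i : Bool) (S : Finset (Fin n)) (hScard : (S.card : ℝ) ≤ ρ * n) :
    -- embed `S` into side `i` of the bipartition
    let emb : Fin n → Fin n ⊕ Fin n := fun a => if i then Sum.inr a else Sum.inl a
    let Semb : Finset (Fin n ⊕ Fin n) := S.image emb
    let bdry : Finset (Fin n ⊕ Fin n) :=
      Finset.univ.filter (fun w => w ∉ Semb ∧ ∃ v ∈ Semb, G.Adj w v)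
    (S.card : ℝ) / (ρ + (lam ^ 2 / (Δ : ℝ) ^ 2) * (1 - ρ)) ≤ (bdry.card : ℝ) :=
  stmt2_general n Δ lam ρ hlam0 hlamΔ G hconn hbip hreg hspec i S hScard
end

section
/- Let G be a connected Δ-regular bipartite graph with parts of size n and second eigenvalue at most λ, let q ≥ 2, δ ∈ (0,1), and let H be a symmetric q×q δ-matrix. Let ε ∈ (0,1) satisfy ε ≥ 2qλ/Δ and ε² ≥ 8q²log(q)/(Δ log(1/δ)). Then Z_{G,H} − Z_{G,H,ε} ≤ q^{−2n}, and hence Z_{G,H,ε} is an e^{−n}-approximation to Z_{G,H}. -/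
open Finset
open scoped Classical

def IsDeltaMatrix {q : ℕ} (δ : ℝ) (H : Matrix (Fin q) (Fin q) ℝ) : Prop :=
  (∀ i j, 0 ≤ H i j) ∧ (∃ i j, H i j = 1) ∧ (∀ i j, H i j = 1 ∨ H i j ≤ δ)

def IsBiclique {q : ℕ} (H : Matrix (Fin q) (Fin q) ℝ) (B0 B1 : Finset (Fin q)) : Prop :=
  ∀ i ∈ B0, ∀ j ∈ B1, H i j = 1

def IsMaxBiclique {q : ℕ} (H : Matrix (Fin q) (Fin q) ℝ) (B0 B1 : Finset (Fin q)) : Prop :=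
  IsBiclique H B0 B1 ∧
    ∀ C0 C1, IsBiclique H C0 C1 → B0 ⊆ C0 → B1 ⊆ C1 → C0 = B0 ∧ C1 = B1

/-- Weight of a spin configuration on a bipartite graph (each edge counted once). -/
def bipWeight {n q : ℕ} (G : SimpleGraph (Fin n ⊕ Fin n)) [DecidableRel G.Adj]
    (H : Matrix (Fin q) (Fin q) ℝ) (σ : Fin n ⊕ Fin n → Fin q) : ℝ :=
  ∏ u : Fin n, ∏ v : Fin n,
    if G.Adj (Sum.inl u) (Sum.inr v) then H (σ (Sum.inl u)) (σ (Sum.inr v)) else 1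

/-- `σ` is within `ε` of the maximal biclique `(B₀,B₁)`:
all but an `ε`-fraction of the vertices get ground-state spins. -/
def NearBiclique {n q : ℕ} (ε : ℝ) (B0 B1 : Finset (Fin q))
    (σ : Fin n ⊕ Fin n → Fin q) : Prop :=
  (1 - ε) * (2 * n) ≤
    ((Finset.univ.filter (fun u : Fin n => σ (Sum.inl u) ∈ B0)).card : ℝ) +
      ((Finset.univ.filter (fun u : Fin n => σ (Sum.inr u) ∈ B1)).card : ℝ)

/-!
Call a spin heavy on a side if it occupies at least `εn/q` vertices there. The light spins
cover at most `q · εn/q = εn` vertices of each side, so if the heavy spins formed a biclique of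
`H`, then `σ` would be `ε`-close to every maximal biclique containing it. Hence a configuration
far from all maximal bicliques has heavy spins `i` (left) and `j` (right) with `H i j ≤ δ`.
Apart from the eigenvalues `±Δ`, whose eigenvectors are constant on each side, the adjacency
spectrum lies in `[-λ, λ]`; this gives the expander mixing lemma, so at least
`Δ ε² n / (2q²)` edges join the two classes, and `σ` has weight at most
`δ ^ (Δ ε² n / (2q²)) ≤ q ^ (-4n)`. Summing over the `q ^ (2n)` configurations bounds
`Z - Z_ε`, and `Z ≥ 1` turns this into a relative error.
-/

open Matrix
open scoped RealInnerProductSpace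

theorem LinearMap.IsSymmetric.abs_inner_apply_le {E : Type*} [NormedAddCommGroup E]
    [InnerProductSpace ℝ E] [FiniteDimensional ℝ E] {T : E →ₗ[ℝ] E} (hT : T.IsSymmetric)
    {lam : ℝ} (hlam : 0 ≤ lam) {x : E}
    (hx : ∀ μ : ℝ, lam < |μ| → ∀ v ∈ Module.End.eigenspace T μ, ⟪v, x⟫ = 0) (y : E) :
    |⟪x, T y⟫| ≤ lam * ‖x‖ * ‖y‖ := by
  set b := hT.eigenvectorBasis rfl
  set μ := hT.eigenvalues rfl
  set c := b.repr x
  set d := b.repr y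
  have hterm : ∀ i, |c i * (μ i * d i)| ≤ lam * (|c i| * |d i|) := by
    intro i
    by_cases hi : lam < |μ i|
    · have hc : c i = 0 := by
        rw [b.repr_apply_apply]
        exact hx _ hi _ (hT.hasEigenvector_eigenvectorBasis rfl i).1
      simp [hc]
    · rw [abs_mul, abs_mul, mul_left_comm]
      exact mul_le_mul_of_nonneg_right (not_lt.1 hi) (by positivity)
  calc |⟪x, T y⟫| = |∑ i, c i * (μ i * d i)| := by
        rw [← b.repr.inner_map_map, PiLp.inner_apply]
        simp [c, d, μ, b, hT.eigenvectorBasis_apply_self_apply, mul_comm]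
    _ ≤ ∑ i, lam * (|c i| * |d i|) :=
        (abs_sum_le_sum_abs _ _).trans (sum_le_sum fun i _ => hterm i)
    _ = lam * ∑ i, |c i| * |d i| := by rw [mul_sum]
    _ ≤ lam * (‖c‖ * ‖d‖) := by
        gcongr
        simpa [EuclideanSpace.norm_eq] using Real.sum_mul_le_sqrt_mul_sqrt univ (|c ·|) (|d ·|)
    _ = lam * ‖x‖ * ‖y‖ := by rw [b.repr.norm_map, b.repr.norm_map, mul_assoc]

theorem Matrix.IsHermitian.sq_dotProduct_mulVec_le {V : Type*} [Fintype V] [DecidableEq V]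
    {A : Matrix V V ℝ} (hA : A.IsHermitian) {lam : ℝ} (hlam : 0 ≤ lam) {x : V → ℝ}
    (hx : ∀ (μ : ℝ) (v : V → ℝ), A *ᵥ v = μ • v → lam < |μ| → v ⬝ᵥ x = 0) (y : V → ℝ) :
    (x ⬝ᵥ A *ᵥ y) ^ 2 ≤ lam ^ 2 * (x ⬝ᵥ x) * (y ⬝ᵥ y) := by
  have key := (Matrix.isSymmetric_toEuclideanLin_iff.mpr hA).abs_inner_apply_le hlam
    (x := WithLp.toLp 2 x) (fun μ hμ v hv => by
      rw [Module.End.mem_eigenspace_iff, Matrix.toLpLin_apply] at hv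
      simpa [EuclideanSpace.inner_eq_star_dotProduct, dotProduct_comm x] using
        hx μ v.ofLp (by simpa using congrArg WithLp.ofLp hv) hμ) (WithLp.toLp 2 y)
  have hnorm (z : V → ℝ) : ‖WithLp.toLp 2 z‖ ^ 2 = z ⬝ᵥ z := by
    rw [← real_inner_self_eq_norm_sq, EuclideanSpace.inner_eq_star_dotProduct]; simp
  simp only [Matrix.toLpLin_apply, EuclideanSpace.inner_eq_star_dotProduct, star_trivial,
    dotProduct_comm (A *ᵥ y)] at key
  calc (x ⬝ᵥ A *ᵥ y) ^ 2 = |x ⬝ᵥ A *ᵥ y| ^ 2 := (sq_abs _).symm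
    _ ≤ (lam * ‖WithLp.toLp 2 x‖ * ‖WithLp.toLp 2 y‖) ^ 2 := by gcongr
    _ = lam ^ 2 * (x ⬝ᵥ x) * (y ⬝ᵥ y) := by rw [mul_pow, mul_pow, hnorm, hnorm]

theorem Matrix.mem_spectrum_of_mulVec_eq_smul {V K : Type*} [Fintype V] [DecidableEq V] [Field K]
    {A : Matrix V V K} {μ : K} {v : V → K} (hv0 : v ≠ 0) (hv : A *ᵥ v = μ • v) :
    μ ∈ spectrum K A := by
  rw [← Matrix.spectrum_toLin']
  exact (Module.End.hasEigenvalue_of_hasEigenvector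
    ⟨Module.End.mem_eigenspace_iff.2 (by simpa using hv), hv0⟩).mem_spectrum

theorem Matrix.sumElim_zero_dotProduct_mulVec_sumElim_zero {l m n o α : Type*} [Fintype l]
    [Fintype m] [Fintype n] [Fintype o] [NonUnitalNonAssocSemiring α]
    (M : Matrix (l ⊕ m) (n ⊕ o) α) (f : l → α) (g : o → α) :
    Sum.elim f 0 ⬝ᵥ M *ᵥ Sum.elim 0 g = f ⬝ᵥ M.toBlocks₁₂ *ᵥ g := by
  rw [← fromBlocks_toBlocks M, fromBlocks_mulVec]
  simp [sumElim_dotProduct_sumElim]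

theorem Finset.indicator_dotProduct_indicator {ι : Type*} [Fintype ι] [DecidableEq ι]
    (S T : Finset ι) :
    (S : Set ι).indicator (1 : ι → ℝ) ⬝ᵥ (T : Set ι).indicator 1 = #(S ∩ T) := by
  simp only [dotProduct, Set.indicator_apply, mem_coe, Pi.one_apply, mul_ite, mul_one, mul_zero,
    ← ite_and, sum_boole, Nat.cast_inj]
  congr 1
  ext
  simp [and_comm]

section CentredIndicator

variable {ι : Type*} [Fintype ι]

noncomputable def Finset.centredIndicator (S : Finset ι) : ι → ℝ :=
  (S : Set ι).indicator 1 - (#S / Fintype.card ι : ℝ) • 1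

theorem Finset.centredIndicator_eq (S : Finset ι) :
    S.centredIndicator =
      (S : Set ι).indicator 1 -
        (#S / Fintype.card ι : ℝ) • ((univ : Finset ι) : Set ι).indicator 1 := by
  simp [centredIndicator]

theorem Finset.sum_centredIndicator [DecidableEq ι] [Nonempty ι] (S : Finset ι) :
    ∑ a, S.centredIndicator a = 0 := by
  have h : ∑ a, S.centredIndicator a =
      S.centredIndicator ⬝ᵥ ((univ : Finset ι) : Set ι).indicator 1 := by
    simp [dotProduct]
  rw [h, centredIndicator_eq]
  simp only [sub_dotProduct, smul_dotProduct, indicator_dotProduct_indicator, inter_univ,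
    card_univ, smul_eq_mul]
  field_simp
  ring

theorem Finset.centredIndicator_dotProduct_self_le [DecidableEq ι] [Nonempty ι] (S : Finset ι) :
    S.centredIndicator ⬝ᵥ S.centredIndicator ≤ #S := by
  have h : S.centredIndicator ⬝ᵥ S.centredIndicator = #S - #S ^ 2 / Fintype.card ι := by
    rw [centredIndicator_eq]
    simp only [sub_dotProduct, dotProduct_sub, smul_dotProduct, dotProduct_smul,
      indicator_dotProduct_indicator, inter_self, inter_univ, univ_inter, card_univ, smul_eq_mul]
    field_simp
    ring
  have : (0 : ℝ) ≤ #S ^ 2 / Fintype.card ι := by positivity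
  linarith

end CentredIndicator

namespace SimpleGraph

theorem Connected.eq_of_adjMatrix_mulVec_eq_smul {V : Type*} [Fintype V] {G : SimpleGraph V}
    [DecidableRel G.Adj] (hconn : G.Connected) {Δ : ℕ} (hreg : G.IsRegularOfDegree Δ)
    {x : V → ℝ} (hx : G.adjMatrix ℝ *ᵥ x = (Δ : ℝ) • x) (u v : V) : x u = x v := by
  have hL : G.lapMatrix ℝ *ᵥ x = 0 := by
    ext w
    rw [lapMatrix_mulVec_apply, ← adjMatrix_mulVec_apply, hx, hreg w]
    simp
  exact G.lapMatrix_mulVec_eq_zero_iff_forall_reachable.1 hL u v (hconn u v)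

section Bipartite

variable {ι : Type*} {G : SimpleGraph (ι ⊕ ι)} [DecidableRel G.Adj]

variable (G) in
def crossEdges (S T : Finset ι) : Finset (ι × ι) :=
  {p ∈ S ×ˢ T | G.Adj (Sum.inl p.1) (Sum.inr p.2)}

theorem card_crossEdges (S T : Finset ι) :
    (#(G.crossEdges S T) : ℝ) =
      ∑ a ∈ S, ∑ b ∈ T, if G.Adj (Sum.inl a) (Sum.inr b) then 1 else 0 := by
  rw [crossEdges, card_filter, sum_product]
  push_cast
  rfl

variable [Fintype ι]

theorem adjMatrix_mulVec_sumElim_neg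
    (hbip : ∀ a b : ι, ¬ G.Adj (Sum.inl a) (Sum.inl b) ∧ ¬ G.Adj (Sum.inr a) (Sum.inr b))
    (x : ι ⊕ ι → ℝ) :
    G.adjMatrix ℝ *ᵥ Sum.elim (x ∘ Sum.inl) (-(x ∘ Sum.inr)) =
      -Sum.elim ((G.adjMatrix ℝ *ᵥ x) ∘ Sum.inl) (-((G.adjMatrix ℝ *ᵥ x) ∘ Sum.inr)) := by
  ext (a | a) <;> simp [mulVec, dotProduct, Fintype.sum_sum_type, adjMatrix_apply, hbip,
    ← sum_neg_distrib, neg_ite]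

theorem eq_on_sides_of_adjMatrix_mulVec_eq_smul (hconn : G.Connected) {Δ : ℕ}
    (hreg : G.IsRegularOfDegree Δ)
    (hbip : ∀ a b : ι, ¬ G.Adj (Sum.inl a) (Sum.inl b) ∧ ¬ G.Adj (Sum.inr a) (Sum.inr b))
    {μ : ℝ} (hμ : μ = Δ ∨ μ = -Δ) {v : ι ⊕ ι → ℝ} (hv : G.adjMatrix ℝ *ᵥ v = μ • v) (a b : ι) :
    v (Sum.inl a) = v (Sum.inl b) ∧ v (Sum.inr a) = v (Sum.inr b) := by
  rcases hμ with rfl | rfl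
  · exact ⟨hconn.eq_of_adjMatrix_mulVec_eq_smul hreg hv _ _,
      hconn.eq_of_adjMatrix_mulVec_eq_smul hreg hv _ _⟩
  · -- flipping the sign on one side turns a `-Δ`-eigenvector into a `Δ`-eigenvector
    have hflip := hconn.eq_of_adjMatrix_mulVec_eq_smul hreg
      (x := Sum.elim (v ∘ Sum.inl) (-(v ∘ Sum.inr)))
      (by rw [adjMatrix_mulVec_sumElim_neg hbip, hv]; ext (c | c) <;> simp)
    exact ⟨by simpa using hflip (.inl a) (.inl b), by simpa using hflip (.inr a) (.inr b)⟩

theorem dotProduct_eq_zero_of_eq_on_sides {v x : ι ⊕ ι → ℝ}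
    (hv : ∀ a b, v (Sum.inl a) = v (Sum.inl b) ∧ v (Sum.inr a) = v (Sum.inr b))
    (hxl : ∑ a, x (Sum.inl a) = 0) (hxr : ∑ a, x (Sum.inr a) = 0) : v ⬝ᵥ x = 0 := by
  rcases isEmpty_or_nonempty ι with _ | ⟨⟨a₀⟩⟩
  · simp [dotProduct]
  rw [dotProduct, Fintype.sum_sum_type]
  simp_rw [fun a => (hv a a₀).1, fun a => (hv a a₀).2, ← mul_sum, hxl, hxr, mul_zero, add_zero]

theorem sq_dotProduct_adjMatrix_mulVec_le [DecidableEq ι] (hconn : G.Connected) {Δ : ℕ}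
    (hreg : G.IsRegularOfDegree Δ)
    (hbip : ∀ a b : ι, ¬ G.Adj (Sum.inl a) (Sum.inl b) ∧ ¬ G.Adj (Sum.inr a) (Sum.inr b))
    {lam : ℝ} (hlam : 0 ≤ lam)
    (hspec : ∀ μ ∈ spectrum ℝ (G.adjMatrix ℝ), μ ≠ (Δ : ℝ) → μ ≠ -(Δ : ℝ) → |μ| ≤ lam)
    {x : ι ⊕ ι → ℝ} (hxl : ∑ a, x (Sum.inl a) = 0) (hxr : ∑ a, x (Sum.inr a) = 0)
    (y : ι ⊕ ι → ℝ) :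
    (x ⬝ᵥ G.adjMatrix ℝ *ᵥ y) ^ 2 ≤ lam ^ 2 * (x ⬝ᵥ x) * (y ⬝ᵥ y) := by
  refine (G.isHermitian_adjMatrix ℝ).sq_dotProduct_mulVec_le hlam (fun μ v hv hμ => ?_) y
  by_cases hv0 : v = 0
  · simp [hv0]
  have hμΔ : μ = Δ ∨ μ = -Δ := by
    by_contra! h
    exact (hspec μ (Matrix.mem_spectrum_of_mulVec_eq_smul hv0 hv) h.1 h.2).not_gt hμ
  exact dotProduct_eq_zero_of_eq_on_sides
    (eq_on_sides_of_adjMatrix_mulVec_eq_smul hconn hreg hbip hμΔ hv) hxl hxr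

theorem indicator_dotProduct_toBlocks₁₂_mulVec_indicator (S T : Finset ι) :
    (S : Set ι).indicator 1 ⬝ᵥ (G.adjMatrix ℝ).toBlocks₁₂ *ᵥ (T : Set ι).indicator 1 =
      #(G.crossEdges S T) := by
  simp [card_crossEdges, dotProduct, mulVec, Set.indicator_apply, toBlocks₁₂, adjMatrix_apply,
    sum_ite_mem]

theorem card_crossEdges_univ_right {Δ : ℕ} (hreg : G.IsRegularOfDegree Δ)
    (hbip : ∀ a b : ι, ¬ G.Adj (Sum.inl a) (Sum.inl b) ∧ ¬ G.Adj (Sum.inr a) (Sum.inr b))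
    (S : Finset ι) : (#(G.crossEdges S univ) : ℝ) = Δ * #S := by
  have hdeg (a : ι) : ∑ b, (if G.Adj (Sum.inl a) (Sum.inr b) then 1 else 0 : ℝ) = Δ := by
    have h := G.degree_eq_sum_if_adj (R := ℝ) (Sum.inl a)
    rw [hreg, Fintype.sum_sum_type] at h
    simpa [hbip] using h.symm
  simp [card_crossEdges, hdeg, mul_comm]

theorem card_crossEdges_univ_left {Δ : ℕ} (hreg : G.IsRegularOfDegree Δ)
    (hbip : ∀ a b : ι, ¬ G.Adj (Sum.inl a) (Sum.inl b) ∧ ¬ G.Adj (Sum.inr a) (Sum.inr b))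
    (T : Finset ι) : (#(G.crossEdges univ T) : ℝ) = Δ * #T := by
  have hdeg (b : ι) : ∑ a, (if G.Adj (Sum.inl a) (Sum.inr b) then 1 else 0 : ℝ) = Δ := by
    have h := G.degree_eq_sum_if_adj (R := ℝ) (Sum.inr b)
    rw [hreg, Fintype.sum_sum_type] at h
    simpa [hbip, G.adj_comm (Sum.inr b)] using h.symm
  rw [card_crossEdges, sum_comm]
  simp [hdeg, mul_comm]

theorem centredIndicator_dotProduct_toBlocks₁₂_mulVec_centredIndicator [DecidableEq ι]
    [Nonempty ι] {Δ : ℕ} (hreg : G.IsRegularOfDegree Δ)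
    (hbip : ∀ a b : ι, ¬ G.Adj (Sum.inl a) (Sum.inl b) ∧ ¬ G.Adj (Sum.inr a) (Sum.inr b))
    (S T : Finset ι) :
    S.centredIndicator ⬝ᵥ (G.adjMatrix ℝ).toBlocks₁₂ *ᵥ T.centredIndicator =
      #(G.crossEdges S T) - Δ * #S * #T / Fintype.card ι := by
  simp only [centredIndicator_eq, sub_dotProduct, dotProduct_sub, smul_dotProduct,
    dotProduct_smul, mulVec_sub, mulVec_smul, indicator_dotProduct_toBlocks₁₂_mulVec_indicator,
    card_crossEdges_univ_left hreg hbip, card_crossEdges_univ_right hreg hbip, card_univ,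
    smul_eq_mul]
  field_simp
  ring

theorem abs_card_crossEdges_sub_le [DecidableEq ι] (hconn : G.Connected) {Δ : ℕ}
    (hreg : G.IsRegularOfDegree Δ)
    (hbip : ∀ a b : ι, ¬ G.Adj (Sum.inl a) (Sum.inl b) ∧ ¬ G.Adj (Sum.inr a) (Sum.inr b))
    {lam : ℝ} (hlam : 0 ≤ lam)
    (hspec : ∀ μ ∈ spectrum ℝ (G.adjMatrix ℝ), μ ≠ (Δ : ℝ) → μ ≠ -(Δ : ℝ) → |μ| ≤ lam)
    (S T : Finset ι) :
    |(#(G.crossEdges S T) : ℝ) - Δ * #S * #T / Fintype.card ι| ≤ lam * √((#S : ℝ) * #T) := by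
  rcases isEmpty_or_nonempty ι with _ | _
  · simp [Subsingleton.elim S ∅, crossEdges]
  have key := sq_dotProduct_adjMatrix_mulVec_le hconn hreg hbip hlam hspec
    (x := Sum.elim S.centredIndicator 0) (by simpa using S.sum_centredIndicator) (by simp)
    (Sum.elim 0 T.centredIndicator)
  rw [sumElim_zero_dotProduct_mulVec_sumElim_zero,
    centredIndicator_dotProduct_toBlocks₁₂_mulVec_centredIndicator hreg hbip] at key
  simp only [sumElim_dotProduct_sumElim, dotProduct_zero, add_zero, zero_add] at key
  refine abs_le_of_sq_le_sq ?_ (by positivity)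
  calc _ ≤ lam ^ 2 * (S.centredIndicator ⬝ᵥ S.centredIndicator) *
        (T.centredIndicator ⬝ᵥ T.centredIndicator) := key
    _ ≤ lam ^ 2 * #S * #T := by
      gcongr
      exacts [sum_nonneg fun _ _ => mul_self_nonneg _, S.centredIndicator_dotProduct_self_le,
        T.centredIndicator_dotProduct_self_le]
    _ = (lam * √((#S : ℝ) * #T)) ^ 2 := by rw [mul_pow, Real.sq_sqrt (by positivity), mul_assoc]

theorem le_card_crossEdges [DecidableEq ι] (hconn : G.Connected) {Δ : ℕ}
    (hreg : G.IsRegularOfDegree Δ)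
    (hbip : ∀ a b : ι, ¬ G.Adj (Sum.inl a) (Sum.inl b) ∧ ¬ G.Adj (Sum.inr a) (Sum.inr b))
    {lam : ℝ} (hlam : 0 ≤ lam)
    (hspec : ∀ μ ∈ spectrum ℝ (G.adjMatrix ℝ), μ ≠ (Δ : ℝ) → μ ≠ -(Δ : ℝ) → |μ| ≤ lam)
    {m : ℝ} (hm : 0 < m) (hlamm : 2 * Fintype.card ι * lam ≤ Δ * m) {S T : Finset ι}
    (hS : m ≤ #S) (hT : m ≤ #T) :
    Δ * m ^ 2 / (2 * Fintype.card ι) ≤ #(G.crossEdges S T) := by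
  set n : ℝ := (Fintype.card ι : ℝ)
  have hn : 0 < n := hm.trans_le (hS.trans (Nat.cast_le.2 (card_le_univ S)))
  have hmix := (abs_le.1 (abs_card_crossEdges_sub_le hconn hreg hbip hlam hspec S T)).1
  rw [neg_le_sub_iff_le_add, div_le_iff₀ hn] at hmix
  set r := √((#S : ℝ) * #T)
  have hr : r ^ 2 = #S * #T := Real.sq_sqrt (by positivity)
  have hmr : m ≤ r := Real.le_sqrt_of_sq_le (by nlinarith)
  rw [div_le_iff₀ (by positivity)]
  -- with `e = #(G.crossEdges S T)`: `2n·e ≥ 2Δr² - 2n·λ·r ≥ 2Δr² - Δmr ≥ Δr² ≥ Δm²`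
  nlinarith [mul_le_mul_of_nonneg_right hlamm (hm.le.trans hmr),
    mul_le_mul_of_nonneg_left hmr (by positivity : (0 : ℝ) ≤ Δ * m),
    mul_le_mul_of_nonneg_left hmr (by positivity : (0 : ℝ) ≤ Δ * r)]

end Bipartite

end SimpleGraph

theorem exists_isMaxBiclique_superset {q : ℕ} {H : Matrix (Fin q) (Fin q) ℝ}
    {B0 B1 : Finset (Fin q)} (h : IsBiclique H B0 B1) :
    ∃ C0 C1, IsMaxBiclique H C0 C1 ∧ B0 ⊆ C0 ∧ B1 ⊆ C1 := by
  let ext : Finset (Finset (Fin q) × Finset (Fin q)) :=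
    {p | IsBiclique H p.1 p.2 ∧ B0 ⊆ p.1 ∧ B1 ⊆ p.2}
  obtain ⟨p, hp, hmax⟩ :=
    exists_max_image ext (fun p => #p.1 + #p.2) ⟨(B0, B1), by simp [ext, h]⟩
  simp only [ext, mem_filter, mem_univ, true_and] at hp hmax
  refine ⟨p.1, p.2, ⟨hp.1, fun C0 C1 hC h0 h1 => ?_⟩, hp.2⟩
  have hcard : #C0 + #C1 ≤ #p.1 + #p.2 := hmax (C0, C1) ⟨hC, hp.2.1.trans h0, hp.2.2.trans h1⟩
  have := card_le_card h0
  have := card_le_card h1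
  exact ⟨(eq_of_subset_of_card_le h0 (by omega)).symm,
    (eq_of_subset_of_card_le h1 (by omega)).symm⟩

theorem NearBiclique.mono {n q : ℕ} {ε : ℝ} {B0 B1 C0 C1 : Finset (Fin q)}
    {σ : Fin n ⊕ Fin n → Fin q} (h : NearBiclique ε B0 B1 σ) (h0 : B0 ⊆ C0) (h1 : B1 ⊆ C1) :
    NearBiclique ε C0 C1 σ := by
  refine h.trans (add_le_add ?_ ?_) <;> gcongr

theorem card_sub_mul_le_card_filter_heavy {α κ : Type*} [Fintype α] [Fintype κ] [DecidableEq κ]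
    (f : α → κ) {thr : ℝ} (hthr : 0 ≤ thr) :
    (Fintype.card α : ℝ) - Fintype.card κ * thr ≤
      #{a | f a ∈ ({k | thr ≤ #{b | f b = k}} : Finset κ)} := by
  set B : Finset κ := {k | thr ≤ #{b | f b = k}}
  have hlight : (#{a | f a ∈ univ \ B} : ℝ) ≤ Fintype.card κ * thr := by
    rw [← sum_card_fiberwise_eq_card_filter, Nat.cast_sum]
    calc ∑ k ∈ univ \ B, (#{b | f b = k} : ℝ) ≤ ∑ _k ∈ univ \ B, thr :=
          sum_le_sum fun k hk => (by simpa [B] using (mem_sdiff.1 hk).2 : (_ : ℝ) < thr).le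
      _ ≤ Fintype.card κ * thr := by
          rw [sum_const, nsmul_eq_mul]
          gcongr
          exact card_le_univ _
  have hsplit := card_filter_add_card_filter_not (s := (univ : Finset α)) (fun a => f a ∈ B)
  simp only [card_univ] at hsplit
  simp only [mem_sdiff, mem_univ, true_and] at hlight
  rw [← hsplit]
  push_cast
  linarith

theorem exists_heavy_nonedge_of_forall_not_nearBiclique {n q : ℕ} (hq : 0 < q)
    {H : Matrix (Fin q) (Fin q) ℝ} {ε : ℝ} (hε : 0 ≤ ε) {σ : Fin n ⊕ Fin n → Fin q}
    (hσ : ¬ ∃ B0 B1, IsMaxBiclique H B0 B1 ∧ NearBiclique ε B0 B1 σ) :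
    ∃ i j, H i j ≠ 1 ∧ ε * n / q ≤ #{u | σ (Sum.inl u) = i} ∧
      ε * n / q ≤ #{u | σ (Sum.inr u) = j} := by
  set thr := ε * n / q
  have hthr : 0 ≤ thr := by positivity
  have hqthr : (q : ℝ) * thr = ε * n := by
    simp only [thr]
    field_simp
  set B0 : Finset (Fin q) := {i | thr ≤ #{u | σ (Sum.inl u) = i}}
  set B1 : Finset (Fin q) := {j | thr ≤ #{u | σ (Sum.inr u) = j}}
  have hnear : NearBiclique ε B0 B1 σ := by
    have h0 := card_sub_mul_le_card_filter_heavy (σ ∘ Sum.inl) hthr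
    have h1 := card_sub_mul_le_card_filter_heavy (σ ∘ Sum.inr) hthr
    simp only [Fintype.card_fin, Function.comp_apply] at h0 h1
    unfold NearBiclique
    linarith
  by_contra! hbic
  have hB : IsBiclique H B0 B1 := fun i hi j hj => by
    by_contra hij
    simp only [B0, B1, mem_filter, mem_univ, true_and] at hi hj
    exact (hbic i j hij hi).not_ge hj
  obtain ⟨C0, C1, hmax, h0, h1⟩ := exists_isMaxBiclique_superset hB
  exact hσ ⟨C0, C1, hmax, hnear.mono h0 h1⟩

section Weight

variable {n q : ℕ} {G : SimpleGraph (Fin n ⊕ Fin n)} [DecidableRel G.Adj]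
  {H : Matrix (Fin q) (Fin q) ℝ}

theorem bipWeight_eq_prod_crossEdges (σ : Fin n ⊕ Fin n → Fin q) :
    bipWeight G H σ = ∏ p ∈ G.crossEdges univ univ, H (σ (Sum.inl p.1)) (σ (Sum.inr p.2)) := by
  rw [bipWeight, SimpleGraph.crossEdges, prod_filter, prod_product]

theorem bipWeight_nonneg (hH : ∀ i j, 0 ≤ H i j) (σ : Fin n ⊕ Fin n → Fin q) :
    0 ≤ bipWeight G H σ :=
  prod_nonneg fun _ _ => prod_nonneg fun _ _ => by split_ifs <;> simp [hH]

theorem bipWeight_le_pow_card_crossEdges (hH0 : ∀ i j, 0 ≤ H i j) (hH1 : ∀ i j, H i j ≤ 1)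
    {δ : ℝ} {i j : Fin q} (hij : H i j ≤ δ) (σ : Fin n ⊕ Fin n → Fin q) :
    bipWeight G H σ ≤ δ ^ #(G.crossEdges {u | σ (Sum.inl u) = i} {u | σ (Sum.inr u) = j}) := by
  set P := G.crossEdges {u | σ (Sum.inl u) = i} {u | σ (Sum.inr u) = j}
  have hP : P ⊆ G.crossEdges univ univ := by
    intro p hp
    simp only [P, SimpleGraph.crossEdges, mem_filter, mem_product, mem_univ, true_and] at hp ⊢
    exact hp.2
  rw [bipWeight_eq_prod_crossEdges, ← prod_sdiff hP]
  calc _ ≤ 1 * δ ^ #P := by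
        gcongr
        · exact prod_nonneg fun _ _ => hH0 _ _
        · exact prod_le_one (fun _ _ => hH0 _ _) fun _ _ => hH1 _ _
        · refine (prod_le_prod (fun _ _ => hH0 _ _) fun p hp => ?_).trans_eq (prod_const δ)
          simp only [P, SimpleGraph.crossEdges, mem_filter, mem_product, mem_univ, true_and] at hp
          rw [hp.1.1, hp.1.2]
          exact hij
    _ = δ ^ #P := one_mul _

theorem one_le_sum_bipWeight (hH : ∀ i j, 0 ≤ H i j) {i₀ j₀ : Fin q} (h₁ : H i₀ j₀ = 1) :
    1 ≤ ∑ σ, bipWeight G H σ := by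
  have hσ₀ : bipWeight G H (Sum.elim (fun _ => i₀) (fun _ => j₀)) = 1 :=
    prod_eq_one fun _ _ => prod_eq_one fun _ _ => by simp [h₁]
  exact hσ₀ ▸ single_le_sum (fun σ _ => bipWeight_nonneg hH σ) (mem_univ _)

end Weight

theorem pow_le_inv_pow_of_mul_log_le {δ q : ℝ} (hδ : 0 < δ) (hq : 0 < q) {k K : ℕ}
    (h : K * Real.log q ≤ k * Real.log (1 / δ)) : δ ^ k ≤ (q ^ K)⁻¹ := by
  rw [← Real.log_le_log_iff (by positivity) (by positivity), Real.log_pow, Real.log_inv,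
    Real.log_pow]
  rw [one_div, Real.log_inv] at h
  linarith

theorem inv_pow_two_mul_le_exp_neg {q : ℝ} (hq : 2 ≤ q) (n : ℕ) :
    (q ^ (2 * n))⁻¹ ≤ Real.exp (-n) := by
  rw [Real.exp_neg]
  refine inv_anti₀ (by positivity) ?_
  calc Real.exp n = Real.exp 1 ^ n := by rw [← Real.exp_nat_mul, mul_one]
    _ ≤ (q ^ 2) ^ n := by
      gcongr
      nlinarith [Real.exp_one_lt_d9]
    _ = q ^ (2 * n) := (pow_mul q 2 n).symm

theorem sum_sub_sum_ite_le_card_mul {α : Type*} [Fintype α] (p : α → Prop) [DecidablePred p]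
    (w : α → ℝ) {c : ℝ} (hc : ∀ a, ¬ p a → w a ≤ c) (hc0 : 0 ≤ c) :
    ∑ a, w a - ∑ a, (if p a then w a else 0) ≤ Fintype.card α * c := by
  rw [← sum_sub_distrib, ← nsmul_eq_mul, ← card_univ, ← sum_const]
  refine sum_le_sum fun a _ => ?_
  split_ifs with ha
  · simpa using hc0
  · simpa using hc a ha

theorem one_sub_mul_le_and_le_one_add_mul {Z Zε η : ℝ} (hZ : 1 ≤ Z) (hle : Zε ≤ Z) (hη : 0 ≤ η)
    (hsub : Z - Zε ≤ η) : (1 - η) * Z ≤ Zε ∧ Zε ≤ (1 + η) * Z := by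
  constructor <;> nlinarith

theorem bipWeight_le_of_forall_not_nearBiclique {n q Δ : ℕ} {lam δ ε : ℝ} (hn : 0 < n)
    (hq : 0 < q) (hΔ : 0 < Δ) (hlam : 0 ≤ lam) (hδ0 : 0 < δ) (hδ1 : δ < 1) (hε : 0 < ε)
    (hε2 : 2 * q * lam / Δ ≤ ε)
    (hε3 : 8 * q ^ 2 * Real.log q / (Δ * Real.log (1 / δ)) ≤ ε ^ 2)
    {H : Matrix (Fin q) (Fin q) ℝ} (hH : IsDeltaMatrix δ H)
    {G : SimpleGraph (Fin n ⊕ Fin n)} [DecidableRel G.Adj] (hconn : G.Connected)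
    (hbip : ∀ a b : Fin n, ¬ G.Adj (Sum.inl a) (Sum.inl b) ∧ ¬ G.Adj (Sum.inr a) (Sum.inr b))
    (hreg : G.IsRegularOfDegree Δ)
    (hspec : ∀ μ ∈ spectrum ℝ (G.adjMatrix ℝ), μ ≠ (Δ : ℝ) → μ ≠ -(Δ : ℝ) → |μ| ≤ lam)
    {σ : Fin n ⊕ Fin n → Fin q}
    (hσ : ¬ ∃ B0 B1, IsMaxBiclique H B0 B1 ∧ NearBiclique ε B0 B1 σ) :
    bipWeight G H σ ≤ ((q : ℝ) ^ (4 * n))⁻¹ := by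
  obtain ⟨i, j, hij, hi, hj⟩ := exists_heavy_nonedge_of_forall_not_nearBiclique hq hε.le hσ
  have hHij : H i j ≤ δ := (hH.2.2 i j).resolve_left hij
  have hH1 (i j : Fin q) : H i j ≤ 1 := (hH.2.2 i j).elim le_of_eq fun h => h.trans hδ1.le
  have hlamn : 2 * Fintype.card (Fin n) * lam ≤ Δ * (ε * n / q) := by
    rw [div_le_iff₀ (by positivity)] at hε2
    rw [Fintype.card_fin, mul_div_assoc', le_div_iff₀ (by positivity)]
    nlinarith
  have hedges := G.le_card_crossEdges hconn hreg hbip hlam hspec (by positivity) hlamn hi hj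
  rw [Fintype.card_fin] at hedges
  refine (bipWeight_le_pow_card_crossEdges hH.1 hH1 hHij σ).trans
    (pow_le_inv_pow_of_mul_log_le hδ0 (by positivity) ?_)
  have hlog : 0 < Real.log (1 / δ) := Real.log_pos (by rw [one_div]; exact one_lt_inv₀ hδ0 |>.2 hδ1)
  rw [div_le_iff₀ (by positivity)] at hε3
  push_cast
  calc 4 * n * Real.log q = n / (2 * q ^ 2) * (8 * q ^ 2 * Real.log q) := by
        field_simp
        ring
    _ ≤ n / (2 * q ^ 2) * (ε ^ 2 * (Δ * Real.log (1 / δ))) := by gcongr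
    _ = Δ * (ε * n / q) ^ 2 / (2 * n) * Real.log (1 / δ) := by field_simp
    _ ≤ _ := by gcongr

theorem stmt7_general (n q Δ : ℕ) (lam δ ε : ℝ) (hn : 0 < n) (hq : 2 ≤ q) (hΔ : 3 ≤ Δ)
    (hlam0 : 0 < lam) (hδ0 : 0 < δ) (hδ1 : δ < 1)
    (hε0 : 0 < ε)
    (hε2 : 2 * q * lam / Δ ≤ ε)
    (hε3 : 8 * q ^ 2 * Real.log q / (Δ * Real.log (1 / δ)) ≤ ε ^ 2)
    (H : Matrix (Fin q) (Fin q) ℝ) (hH : IsDeltaMatrix δ H)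
    (G : SimpleGraph (Fin n ⊕ Fin n)) [DecidableRel G.Adj]
    (hconn : G.Connected)
    (hbip : ∀ a b : Fin n, ¬ G.Adj (Sum.inl a) (Sum.inl b) ∧ ¬ G.Adj (Sum.inr a) (Sum.inr b))
    (hreg : ∀ v, G.degree v = Δ)
    (hspec : ∀ μ ∈ spectrum ℝ (G.adjMatrix ℝ), μ ≠ (Δ : ℝ) → μ ≠ -(Δ : ℝ) → |μ| ≤ lam) :
    let Z : ℝ := ∑ σ : Fin n ⊕ Fin n → Fin q, bipWeight G H σ
    let Zε : ℝ := ∑ σ : Fin n ⊕ Fin n → Fin q,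
      if ∃ B0 B1, IsMaxBiclique H B0 B1 ∧ NearBiclique ε B0 B1 σ then bipWeight G H σ else 0
    Z - Zε ≤ ((q : ℝ) ^ (2 * n))⁻¹ ∧
      (1 - Real.exp (-(n : ℝ))) * Z ≤ Zε ∧ Zε ≤ (1 + Real.exp (-(n : ℝ))) * Z := by
  intro Z Zε
  have hfar (σ) (hσ : ¬ ∃ B0 B1, IsMaxBiclique H B0 B1 ∧ NearBiclique ε B0 B1 σ) :=
    bipWeight_le_of_forall_not_nearBiclique hn (by omega) (by omega) hlam0.le hδ0 hδ1 hε0 hε2 hε3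
      hH hconn hbip hreg hspec hσ
  have hgap : Z - Zε ≤ ((q : ℝ) ^ (2 * n))⁻¹ := by
    refine (sum_sub_sum_ite_le_card_mul _ _ hfar (by positivity)).trans_eq ?_
    simp only [Fintype.card_fun, Fintype.card_sum, Fintype.card_fin, ← two_mul]
    rw [show 4 * n = 2 * n + 2 * n by ring, pow_add]
    push_cast
    field_simp
  obtain ⟨i₀, j₀, h₁⟩ := hH.2.1
  have hZεZ : Zε ≤ Z := sum_le_sum fun σ _ => by
    split_ifs
    exacts [le_rfl, bipWeight_nonneg hH.1 σ]
  exact ⟨hgap, one_sub_mul_le_and_le_one_add_mul (one_le_sum_bipWeight hH.1 h₁) hZεZ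
    (Real.exp_pos _).le (hgap.trans (inv_pow_two_mul_le_exp_neg (mod_cast hq) n))⟩

/-- Lemma 3.2: the configurations close to maximal bicliques capture almost all of `Z`. -/
theorem stmt7 (n q Δ : ℕ) (lam δ ε : ℝ) (hn : 0 < n) (hq : 2 ≤ q) (hΔ : 3 ≤ Δ)
    (hlam0 : 0 < lam) (hlamΔ : lam < Δ) (hδ0 : 0 < δ) (hδ1 : δ < 1)
    (hε0 : 0 < ε) (hε1 : ε < 1)
    (hε2 : 2 * q * lam / Δ ≤ ε)
    (hε3 : 8 * q ^ 2 * Real.log q / (Δ * Real.log (1 / δ)) ≤ ε ^ 2)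
    (H : Matrix (Fin q) (Fin q) ℝ) (hsymm : H.IsSymm) (hH : IsDeltaMatrix δ H)
    (G : SimpleGraph (Fin n ⊕ Fin n)) [DecidableRel G.Adj]
    (hconn : G.Connected)
    (hbip : ∀ a b : Fin n, ¬ G.Adj (Sum.inl a) (Sum.inl b) ∧ ¬ G.Adj (Sum.inr a) (Sum.inr b))
    (hreg : ∀ v, G.degree v = Δ)
    (hspec : ∀ μ ∈ spectrum ℝ (G.adjMatrix ℝ), μ ≠ (Δ : ℝ) → μ ≠ -(Δ : ℝ) → |μ| ≤ lam) :
    let Z : ℝ := ∑ σ : Fin n ⊕ Fin n → Fin q, bipWeight G H σ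
    let Zε : ℝ := ∑ σ : Fin n ⊕ Fin n → Fin q,
      if ∃ B0 B1, IsMaxBiclique H B0 B1 ∧ NearBiclique ε B0 B1 σ then bipWeight G H σ else 0
    Z - Zε ≤ ((q : ℝ) ^ (2 * n))⁻¹ ∧
      (1 - Real.exp (-(n : ℝ))) * Z ≤ Zε ∧ Zε ≤ (1 + Real.exp (-(n : ℝ))) * Z :=
  stmt7_general n q Δ lam δ ε hn hq hΔ hlam0 hδ0 hδ1 hε0 hε2 hε3 H hH G hconn hbip hreg hspec
end
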